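/- arXiv:2111.00886 — 2 statements merged into one kernel-verified Lean document; each statement's English description precedes it below -/
import Mathlib

section
/- Let P, P̂ be nonnegative N×k matrices with (2/3)P ≤ P̂ ≤ (4/3)P entrywise, and M, M̂ diagonal k×k matrices with nonnegative diagonals satisfying M̂ ≤ 2M entrywise. Let f* minimize g(f) = ‖P M^{1/2} (Pᵀf)^{∘−1/2}‖_∞² over the simplex and f̂* minimize ĝ(f) = ‖P̂ M̂^{1/2} (P̂ᵀf)^{∘−1/2}‖_∞² over the simplex (restricting to f where the relevant componentwise powers are defined). Then ĝ(f̂*) ≤ 8·g(f*). -/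
open Finset

/-- If `(2/3)P ≤ P̂ ≤ (4/3)P` entrywise and `M̂ ≤ 2M` for the (nonnegative) diagonals, and
`f*`, `f̂*` minimize respectively `g(f) = ‖P M^{1/2} (Pᵀf)^{∘−1/2}‖_∞²` and
`ĝ(f) = ‖P̂ M̂^{1/2} (P̂ᵀf)^{∘−1/2}‖_∞²` over the (positive-image) simplex, then
`ĝ(f̂*) ≤ 8 g(f*)`. -/
theorem lambda_hat_le_eight_lambda (N k : ℕ)
    (P Phat : Fin N → Fin k → ℝ) (m mhat : Fin k → ℝ)
    (hP : ∀ a i, 0 ≤ P a i)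
    (hlow : ∀ a i, (2 / 3) * P a i ≤ Phat a i)
    (hup : ∀ a i, Phat a i ≤ (4 / 3) * P a i)
    (hm : ∀ i, 0 ≤ m i) (hmhat0 : ∀ i, 0 ≤ mhat i) (hmhat : ∀ i, mhat i ≤ 2 * m i)
    (D : Set (Fin N → ℝ))
    (hD : D = {f | (∀ a, 0 ≤ f a) ∧ (∑ a, f a = 1) ∧ ∀ i, 0 < ∑ a, P a i * f a})
    (g ghat : (Fin N → ℝ) → ℝ)
    (hg : g = fun f => (⨆ a : Fin N,
      ∑ i, P a i * Real.sqrt (m i) * (∑ b, P b i * f b) ^ (-(1 / 2) : ℝ)) ^ 2)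
    (hghat : ghat = fun f => (⨆ a : Fin N,
      ∑ i, Phat a i * Real.sqrt (mhat i) * (∑ b, Phat b i * f b) ^ (-(1 / 2) : ℝ)) ^ 2)
    (fstar fhat : Fin N → ℝ) (hfstar : fstar ∈ D) (hfhat : fhat ∈ D)
    (hopt : ∀ f ∈ D, g fstar ≤ g f)
    (hopthat : ∀ f ∈ D, ghat fhat ≤ ghat f) :
    ghat fhat ≤ 8 * g fstar := by
  have h1 : ghat fhat ≤ ghat fstar := hopthat fstar hfstar
  refine h1.trans ?_
  subst hD hg hghat
  obtain ⟨hpos, hsum, hS⟩ := hfstar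
  have hN : Nonempty (Fin N) := by
    rcases Nat.eq_zero_or_pos N with h | h
    · subst h; simp at hsum
    · exact ⟨⟨0, h⟩⟩
  set c : ℝ := (4/3) * Real.sqrt 2 * ((2/3 : ℝ) ^ (-(1/2) : ℝ)) with hc
  have hc0 : 0 ≤ c := by positivity
  set G : Fin N → ℝ := fun a =>
    ∑ i, P a i * Real.sqrt (m i) * (∑ b, P b i * fstar b) ^ (-(1/2) : ℝ) with hG
  set F : Fin N → ℝ := fun a =>
    ∑ i, Phat a i * Real.sqrt (mhat i) * (∑ b, Phat b i * fstar b) ^ (-(1/2) : ℝ) with hF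
  have hGb : BddAbove (Set.range G) := (Set.finite_range G).bddAbove
  have hFb : BddAbove (Set.range F) := (Set.finite_range F).bddAbove
  have hterm : ∀ a i, Phat a i * Real.sqrt (mhat i) * (∑ b, Phat b i * fstar b) ^ (-(1/2) : ℝ)
      ≤ c * (P a i * Real.sqrt (m i) * (∑ b, P b i * fstar b) ^ (-(1/2) : ℝ)) := by
    intro a i
    have hSi := hS i
    have hShat : (2/3) * ∑ b, P b i * fstar b ≤ ∑ b, Phat b i * fstar b := by
      rw [Finset.mul_sum]
      refine Finset.sum_le_sum fun b _ => ?_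
      rw [← mul_assoc]
      exact mul_le_mul_of_nonneg_right (hlow b i) (hpos b)
    have h23 : (0:ℝ) < (2/3) * ∑ b, P b i * fstar b := by positivity
    have hpow : (∑ b, Phat b i * fstar b) ^ (-(1/2) : ℝ)
        ≤ ((2/3 : ℝ) ^ (-(1/2) : ℝ)) * (∑ b, P b i * fstar b) ^ (-(1/2) : ℝ) := by
      rw [← Real.mul_rpow (by norm_num) hSi.le]
      exact Real.rpow_le_rpow_of_nonpos h23 hShat (by norm_num)
    have hsq : Real.sqrt (mhat i) ≤ Real.sqrt 2 * Real.sqrt (m i) := by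
      rw [← Real.sqrt_mul (by norm_num)]
      exact Real.sqrt_le_sqrt (hmhat i)
    calc Phat a i * Real.sqrt (mhat i) * (∑ b, Phat b i * fstar b) ^ (-(1/2) : ℝ)
        ≤ ((4/3) * P a i) * (Real.sqrt 2 * Real.sqrt (m i)) *
          (((2/3 : ℝ) ^ (-(1/2) : ℝ)) * (∑ b, P b i * fstar b) ^ (-(1/2) : ℝ)) := by
          have h1 : 0 ≤ Phat a i := le_trans (by have := hP a i; positivity) (hlow a i)
          have h2 : (0:ℝ) ≤ Real.sqrt (mhat i) := Real.sqrt_nonneg _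
          have h3 : (0:ℝ) ≤ (∑ b, Phat b i * fstar b) ^ (-(1/2) : ℝ) :=
            Real.rpow_nonneg (le_trans h23.le hShat) _
          have h4 : 0 ≤ P a i := hP a i
          exact mul_le_mul (mul_le_mul (hup a i) hsq h2 (by positivity)) hpow h3
            (by positivity)
      _ = c * (P a i * Real.sqrt (m i) * (∑ b, P b i * fstar b) ^ (-(1/2) : ℝ)) := by
          rw [hc]; ring
  have hFG : ∀ a, F a ≤ c * G a := fun a => by
    rw [hF, hG, Finset.mul_sum]
    exact Finset.sum_le_sum fun i _ => hterm a i
  have hsup : (⨆ a, F a) ≤ c * ⨆ a, G a := by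
    refine ciSup_le fun a => (hFG a).trans ?_
    exact mul_le_mul_of_nonneg_left (le_ciSup hGb a) hc0
  have hF0 : 0 ≤ ⨆ a, F a := by
    obtain ⟨a0⟩ := hN
    refine le_trans ?_ (le_ciSup hFb a0)
    rw [hF]
    refine Finset.sum_nonneg fun i _ => ?_
    have h1 : 0 ≤ Phat a0 i := le_trans (by have := hP a0 i; positivity) (hlow _ i)
    have h2 : 0 ≤ ∑ b, Phat b i * fstar b :=
      Finset.sum_nonneg fun b _ => mul_nonneg
        (le_trans (by have := hP b i; positivity) (hlow b i)) (hpos b)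
    positivity
  have hsq : (⨆ a, F a) ^ 2 ≤ (c * ⨆ a, G a) ^ 2 := by
    exact pow_le_pow_left₀ hF0 hsup 2
  refine hsq.trans ?_
  have hc2 : c ^ 2 ≤ 8 := by
    have h2 : Real.sqrt 2 ^ 2 = 2 := Real.sq_sqrt (by norm_num)
    have h3 : ((2/3 : ℝ) ^ (-(1/2) : ℝ)) ^ 2 = (3/2 : ℝ) := by
      rw [← Real.rpow_natCast ((2/3 : ℝ) ^ (-(1/2) : ℝ)) 2, ← Real.rpow_mul (by norm_num)]
      norm_num [Real.rpow_neg_one]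
    have : c ^ 2 = (4/3)^2 * Real.sqrt 2 ^ 2 * ((2/3 : ℝ) ^ (-(1/2) : ℝ)) ^ 2 := by
      rw [hc]; ring
    rw [this, h2, h3]; norm_num
  calc (c * ⨆ a, G a) ^ 2 = c ^ 2 * (⨆ a, G a) ^ 2 := by ring
    _ ≤ 8 * (⨆ a, G a) ^ 2 := by
        exact mul_le_mul_of_nonneg_right hc2 (sq_nonneg _)
end

section
/- Bretagnolle–Huber inequality: for probability measures P and Q on the same measurable space and any event E, P(E) + Q(Eᶜ) ≥ (1/2)·exp(−KL(P‖Q)). -/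
/-!
With `r = dP/dQ`, Jensen's inequality for `exp` under `P` gives
`exp (-KL(P‖Q) / 2) ≤ ∫ r^{-1/2} dP = ∫ √r dQ`, the Bhattacharyya coefficient.
Splitting the latter over `E` and `Eᶜ` and applying Cauchy–Schwarz on each piece bounds it by
`√(P E) + √(Q Eᶜ)`; squaring and `(a + b)² ≤ 2 (a² + b²)` finish the proof.
-/

open Real MeasureTheory

lemma Real.mul_exp_neg_log_div_two {x : ℝ} (hx : 0 ≤ x) : x * exp (-(log x / 2)) = √x := by
  rcases hx.eq_or_lt with rfl | hx
  · simp
  rw [exp_neg, ← log_sqrt hx.le, exp_log (sqrt_pos.mpr hx)]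
  nth_rw 1 [← mul_self_sqrt hx.le]
  exact mul_inv_cancel_right₀ (sqrt_pos.mpr hx).ne' _

namespace MeasureTheory

variable {Ω : Type*} [MeasurableSpace Ω] {P Q : Measure Ω}

lemma memLp_two_sqrt_toReal_rnDeriv [IsFiniteMeasure P] :
    MemLp (fun ω ↦ √(P.rnDeriv Q ω).toReal) 2 Q := by
  refine (memLp_two_iff_integrable_sq
    (Measure.measurable_rnDeriv P Q).ennreal_toReal.sqrt.aestronglyMeasurable).mpr ?_
  simpa only [sq_sqrt ENNReal.toReal_nonneg] using Measure.integrable_toReal_rnDeriv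

lemma integrable_sqrt_toReal_rnDeriv [IsFiniteMeasure P] [IsFiniteMeasure Q] :
    Integrable (fun ω ↦ √(P.rnDeriv Q ω).toReal) Q :=
  memLp_two_sqrt_toReal_rnDeriv.integrable one_le_two

lemma setIntegral_sqrt_toReal_rnDeriv_le [IsFiniteMeasure P] [IsFiniteMeasure Q] (s : Set Ω) :
    ∫ ω in s, √(P.rnDeriv Q ω).toReal ∂Q ≤ √(P.real s) * √(Q.real s) := by
  have holder := integral_mul_le_Lp_mul_Lq_of_nonneg (μ := Q.restrict s)
    HolderConjugate.two_two (ae_of_all _ fun ω ↦ sqrt_nonneg _)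
    (ae_of_all _ fun _ ↦ zero_le_one)
    (by simpa using (memLp_two_sqrt_toReal_rnDeriv (P := P)).restrict s) (memLp_const 1)
  simp only [mul_one, integral_const, smul_eq_mul, measureReal_restrict_apply_univ, one_pow,
    ← sqrt_eq_rpow, rpow_two, sq_sqrt ENNReal.toReal_nonneg] at holder
  refine holder.trans ?_
  gcongr
  exact Measure.setIntegral_toReal_rnDeriv_le (measure_ne_top P s)

lemma exp_neg_integral_llr_div_two_le [IsProbabilityMeasure P] [IsFiniteMeasure Q] (hPQ : P ≪ Q)
    (hint : Integrable (llr P Q) P) :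
    exp (-(∫ ω, llr P Q ω ∂P) / 2) ≤ ∫ ω, √(P.rnDeriv Q ω).toReal ∂Q := by
  have change_of_measure : (fun ω ↦ (P.rnDeriv Q ω).toReal • exp (-(llr P Q ω / 2))) =
      fun ω ↦ √(P.rnDeriv Q ω).toReal :=
    funext fun ω ↦ mul_exp_neg_log_div_two ENNReal.toReal_nonneg
  have hint_exp : Integrable (fun ω ↦ exp (-(llr P Q ω / 2))) P := by
    rw [← integrable_rnDeriv_smul_iff hPQ, change_of_measure]
    exact integrable_sqrt_toReal_rnDeriv
  calc exp (-(∫ ω, llr P Q ω ∂P) / 2) = exp (∫ ω, -(llr P Q ω / 2) ∂P) := by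
        rw [integral_neg, integral_div, neg_div]
    _ ≤ ∫ ω, exp (-(llr P Q ω / 2)) ∂P :=
        convexOn_exp.map_integral_le continuousOn_exp isClosed_univ (ae_of_all _ fun _ ↦ trivial)
          (hint.div_const 2).neg hint_exp
    _ = ∫ ω, √(P.rnDeriv Q ω).toReal ∂Q := by
        rw [← integral_rnDeriv_smul hPQ, change_of_measure]

lemma integral_sqrt_toReal_rnDeriv_le_sqrt_add_sqrt
    [IsProbabilityMeasure P] [IsProbabilityMeasure Q] {E : Set Ω} (hE : MeasurableSet E) :
    ∫ ω, √(P.rnDeriv Q ω).toReal ∂Q ≤ √(P.real E) + √(Q.real Eᶜ) := by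
  rw [← integral_add_compl hE integrable_sqrt_toReal_rnDeriv]
  calc _ ≤ √(P.real E) * √(Q.real E) + √(P.real Eᶜ) * √(Q.real Eᶜ) :=
        add_le_add (setIntegral_sqrt_toReal_rnDeriv_le E) (setIntegral_sqrt_toReal_rnDeriv_le Eᶜ)
    _ ≤ √(P.real E) * 1 + 1 * √(Q.real Eᶜ) := by
        gcongr <;> exact sqrt_le_one.mpr measureReal_le_one
    _ = √(P.real E) + √(Q.real Eᶜ) := by rw [mul_one, one_mul]

end MeasureTheory

/-- Bretagnolle–Huber inequality: for probability measures `P ≪ Q` with (finite)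
Kullback–Leibler divergence `∫ log (dP/dQ) dP`, and any event `E`,
`P(E) + Q(Eᶜ) ≥ (1/2) exp(−KL(P‖Q))`. -/
theorem bretagnolle_huber {Ω : Type*} [MeasurableSpace Ω]
    (P Q : Measure Ω) [IsProbabilityMeasure P] [IsProbabilityMeasure Q]
    (hPQ : P ≪ Q)
    (hint : Integrable (fun ω => Real.log ((P.rnDeriv Q ω).toReal)) P)
    (E : Set Ω) (hE : MeasurableSet E) :
    (1 / 2) * Real.exp (-(∫ ω, Real.log ((P.rnDeriv Q ω).toReal) ∂P)) ≤
      (P E).toReal + (Q Eᶜ).toReal := by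
  set KL := ∫ ω, llr P Q ω ∂P
  have bound : exp (-KL / 2) ≤ √(P.real E) + √(Q.real Eᶜ) :=
    (exp_neg_integral_llr_div_two_le hPQ hint).trans
      (integral_sqrt_toReal_rnDeriv_le_sqrt_add_sqrt hE)
  calc 1 / 2 * exp (-KL) = exp (-KL / 2) ^ 2 / 2 := by rw [← exp_nat_mul]; ring_nf
    _ ≤ (√(P.real E) + √(Q.real Eᶜ)) ^ 2 / 2 := by gcongr
    _ ≤ P.real E + Q.real Eᶜ := by
        linarith [add_sq_le (a := √(P.real E)) (b := √(Q.real Eᶜ)),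
          sq_sqrt (measureReal_nonneg (μ := P) (s := E)),
          sq_sqrt (measureReal_nonneg (μ := Q) (s := Eᶜ))]
end
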